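/- arXiv:2403.14587 — 6 statements merged into one kernel-verified Lean document; each statement's English description precedes it below -/
import Mathlib

section
/- Fix positive integers L ≥ 2 and T. The set of functions obtained by composing a linear layer with instance normalisation — i.e., functions of the form f(x) = μ(x)·1_T + σ(x)·(A·((x − μ(x)·1_L)/σ(x)) + b), defined for x ∈ ℝ^L with σ(x) > 0, where A ranges over T×L real matrices and b over ℝ^T — is exactly equal to the set of functions of the form x ↦ Ã·x + σ(x)·b̃, where b̃ ∈ ℝ^T and Ã is a T×L real matrix each of whose rows sums to 1. More precisely: for every (A, b) there exist such (Ã, b̃) with f(x) = Ã·x + σ(x)·b̃ for all x with σ(x) > 0, and conversely for every (Ã, b̃) with rows of Ã summing to 1 there exist (A, b) realizing the same function on {x : σ(x) > 0}. -/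
/-!
Undoing the normalisation turns `A ((x - μ 1) / σ) + b` into `A x + μ (1 - A 1) + σ b`. The mean
`μ(x) = (1/L) 1ᵀ x` is linear in `x`, so the middle term is absorbed into the matrix as the rank-one
correction `(1 - A 1) (1/L) 1ᵀ`, after which every row sums to `1`. Conversely, if the rows of `A`
already sum to `1`, the middle term vanishes and `(A, b)` itself realises `x ↦ A x + σ(x) b`.
-/

/-- The mean of the components of `x ∈ ℝ^L`. -/
noncomputable def mea (L : ℕ) (x : Fin L → ℝ) : ℝ := (∑ i, x i) / L

/-- The (population) standard deviation of the components of `x ∈ ℝ^L`. -/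
noncomputable def sdev (L : ℕ) (x : Fin L → ℝ) : ℝ :=
  Real.sqrt ((∑ i, (x i - mea L x) ^ 2) / L)

open Matrix

section

variable {K m n : Type*} [Fintype n]

theorem mulVec_one_eq_one_iff [NonAssocSemiring K] (A : Matrix m n K) :
    A *ᵥ 1 = 1 ↔ ∀ i, ∑ j, A i j = 1 := by
  simp [funext_iff, mulVec, dotProduct]

theorem add_vecMulVec_mulVec_one_eq_one [CommRing K] (A : Matrix m n K) {w : n → K}
    (hw : ∑ j, w j = 1) :
    (A + vecMulVec (1 - A *ᵥ 1) w) *ᵥ 1 = 1 := by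
  ext i
  simp [add_mulVec, vecMulVec_mulVec, dotProduct, hw]

theorem denormalize_mulVec_normalize [Field K] (A : Matrix m n K) (b : m → K) (x : n → K)
    {μ σ : K} (hσ : σ ≠ 0) :
    (fun i => μ + σ * ((A *ᵥ fun j => (x j - μ) / σ) i + b i)) =
      A *ᵥ x + μ • (1 - A *ᵥ 1) + σ • b := by
  have hnormalize : (fun j => (x j - μ) / σ) = σ⁻¹ • (x - μ • 1) := by
    ext j
    simp [div_eq_inv_mul]
  ext i
  simp only [hnormalize, mulVec_smul, mulVec_sub, Pi.add_apply, Pi.smul_apply, Pi.sub_apply,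
    smul_eq_mul, Pi.one_apply]
  field_simp
  ring

end

theorem mea_eq_dotProduct (L : ℕ) (x : Fin L → ℝ) : mea L x = (fun _ => (L : ℝ)⁻¹) ⬝ᵥ x := by
  simp [mea, dotProduct, Finset.mul_sum, div_eq_inv_mul]

theorem linear_instance_norm_class_general (L T : ℕ) (hL : 2 ≤ L) :
    (∀ (A : Matrix (Fin T) (Fin L) ℝ) (b : Fin T → ℝ),
      ∃ (At : Matrix (Fin T) (Fin L) ℝ) (bt : Fin T → ℝ),
        (∀ i, ∑ j, At i j = 1) ∧
        ∀ x : Fin L → ℝ, 0 < sdev L x →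
          (fun i => mea L x + sdev L x *
              (A.mulVec (fun j => (x j - mea L x) / sdev L x) i + b i)) =
            At.mulVec x + sdev L x • bt) ∧
    (∀ (At : Matrix (Fin T) (Fin L) ℝ) (bt : Fin T → ℝ), (∀ i, ∑ j, At i j = 1) →
      ∃ (A : Matrix (Fin T) (Fin L) ℝ) (b : Fin T → ℝ),
        ∀ x : Fin L → ℝ, 0 < sdev L x →
          (fun i => mea L x + sdev L x *
              (A.mulVec (fun j => (x j - mea L x) / sdev L x) i + b i)) =
            At.mulVec x + sdev L x • bt) := by
  have hL0 : (L : ℝ) ≠ 0 := Nat.cast_ne_zero.2 (by omega)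
  have hmean_weights : ∑ _ : Fin L, (L : ℝ)⁻¹ = 1 := by simp [hL0]
  refine ⟨fun A b => ?_, fun At bt hrows => ?_⟩
  · refine ⟨A + vecMulVec (1 - A *ᵥ 1) fun _ => (L : ℝ)⁻¹, b,
      (mulVec_one_eq_one_iff _).1 (add_vecMulVec_mulVec_one_eq_one A hmean_weights),
      fun x hx => ?_⟩
    rw [denormalize_mulVec_normalize A b x hx.ne', add_mulVec, vecMulVec_mulVec,
      ← mea_eq_dotProduct, op_smul_eq_smul]
  · refine ⟨At, bt, fun x hx => ?_⟩
    rw [denormalize_mulVec_normalize At bt x hx.ne', (mulVec_one_eq_one_iff At).2 hrows,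
      sub_self, smul_zero, add_zero]

/-- A linear layer composed with instance normalisation realizes exactly the
functions `x ↦ Ã·x + σ(x)·b̃` with the rows of `Ã` summing to 1, on `{x : σ(x) > 0}`. -/
theorem linear_instance_norm_class (L T : ℕ) (hL : 2 ≤ L) (hT : 0 < T) :
    (∀ (A : Matrix (Fin T) (Fin L) ℝ) (b : Fin T → ℝ),
      ∃ (At : Matrix (Fin T) (Fin L) ℝ) (bt : Fin T → ℝ),
        (∀ i, ∑ j, At i j = 1) ∧
        ∀ x : Fin L → ℝ, 0 < sdev L x →
          (fun i => mea L x + sdev L x *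
              (A.mulVec (fun j => (x j - mea L x) / sdev L x) i + b i)) =
            At.mulVec x + sdev L x • bt) ∧
    (∀ (At : Matrix (Fin T) (Fin L) ℝ) (bt : Fin T → ℝ), (∀ i, ∑ j, At i j = 1) →
      ∃ (A : Matrix (Fin T) (Fin L) ℝ) (b : Fin T → ℝ),
        ∀ x : Fin L → ℝ, 0 < sdev L x →
          (fun i => mea L x + sdev L x *
              (A.mulVec (fun j => (x j - mea L x) / sdev L x) i + b i)) =
            At.mulVec x + sdev L x • bt) :=
  linear_instance_norm_class_general L T hL
end

section
/- Fix positive integers L and T. The set of functions realizable as an NLinear model — i.e., functions of the form f(x) = x_L·1_T + A·(x − x_L·1_L) + b, where x_L denotes the last component of x ∈ ℝ^L, A ranges over T×L real matrices and b over ℝ^T — is exactly equal to the set of affine functions x ↦ Ã·x + b̃ where b̃ ∈ ℝ^T is arbitrary and Ã is a T×L real matrix each of whose rows sums to 1. -/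
/-- The NLinear (NowNorm) model class is exactly the set of affine maps
`x ↦ Ã·x + b̃` whose weight matrix has rows summing to 1. -/
theorem nlinear_class (L T : ℕ) (hL : 0 < L) (hT : 0 < T) :
    {f : (Fin L → ℝ) → (Fin T → ℝ) |
      ∃ (A : Matrix (Fin T) (Fin L) ℝ) (b : Fin T → ℝ),
        ∀ x, f x = (fun _ => x ⟨L - 1, by omega⟩) +
          A.mulVec (x - fun _ => x ⟨L - 1, by omega⟩) + b} =
    {f : (Fin L → ℝ) → (Fin T → ℝ) |
      ∃ (At : Matrix (Fin T) (Fin L) ℝ) (bt : Fin T → ℝ),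
        (∀ i, ∑ j, At i j = 1) ∧ ∀ x, f x = At.mulVec x + bt} := by
  ext f
  simp only [Set.mem_setOf_eq]
  constructor
  · rintro ⟨A, b, hf⟩
    refine ⟨fun i j => A i j +
        (if j = (⟨L - 1, by omega⟩ : Fin L) then 1 - ∑ k, A i k else 0), b, ?_, ?_⟩
    · intro i
      rw [Finset.sum_add_distrib, Finset.sum_ite_eq' Finset.univ]
      simp
    · intro x
      rw [hf]
      funext i
      simp only [Pi.add_apply, Pi.sub_apply, Matrix.mulVec, dotProduct,
        add_mul, ite_mul, zero_mul, mul_sub, Finset.sum_add_distrib,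
        Finset.sum_sub_distrib, Finset.sum_ite_eq' Finset.univ,
        Finset.mem_univ, if_true, ← Finset.sum_mul, sub_mul, one_mul]
      ring
  · rintro ⟨At, bt, hrow, hf⟩
    refine ⟨At, bt, fun x => ?_⟩
    rw [hf]
    funext i
    simp only [Pi.add_apply, Pi.sub_apply, Matrix.mulVec, dotProduct,
      mul_sub, Finset.sum_sub_distrib, ← Finset.sum_mul, hrow i, one_mul]
    ring
end

section
/- Let L and T be even positive integers with L ≥ T − 2. Consider FITS models without a low-pass filter: for a complex ((L+T)/2 + 1) × (L/2 + 1) matrix W and a complex vector c ∈ ℂ^{(L+T)/2+1}, the model maps x ∈ ℝ^L to the last T coordinates of iRFT_{L+T}(W·RFT_L(x) + c) ∈ ℂ^{L+T}. Then: (i) for every such W and c, the output vector has all real coordinates and the resulting map ℝ^L → ℝ^T equals x ↦ Ax + b for some real T×L matrix A and some b ∈ ℝ^T; and (ii) conversely, for every real T×L matrix A and every b ∈ ℝ^T there exist W and c such that the FITS model equals x ↦ Ax + b. Hence the FITS model class is exactly the set of all affine maps ℝ^L → ℝ^T. -/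
/-- The (unnormalised) discrete Fourier transform matrix `D_N`,
with entries `(D_N)_{jk} = exp(−2πi·jk/N)`. -/
noncomputable def Dmat (N : ℕ) : Matrix (Fin N) (Fin N) ℂ :=
  Matrix.of fun j k =>
    Complex.exp (-(2 * (Real.pi : ℂ) * Complex.I * (j : ℕ) * (k : ℕ)) / N)

/-- The inverse DFT matrix `D_N⁻¹ = (1/N)·D_N^*`. -/
noncomputable def DmatInv (N : ℕ) : Matrix (Fin N) (Fin N) ℂ :=
  ((N : ℂ)⁻¹) • (Dmat N).conjTranspose

/-- The projection `Π_N : ℂ^N → ℂ^{N/2+1}` for even `N = 2·(m+1)`,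
`Π_N(Y_0,…,Y_{N−1}) = (Y_0,…,Y_{N/2})`. -/
def PiProj (m : ℕ) (Y : Fin (2 * (m + 1)) → ℂ) : Fin (m + 2) → ℂ :=
  fun j => Y ⟨j.val, by have := j.isLt; omega⟩

/-- The map `Π_N⁻¹ : ℂ^{N/2+1} → ℂ^N` for even `N = 2·(m+1)`,
`Π_N⁻¹(Y_0,…,Y_{N/2}) = (Re Y_0, Y_1, …, Y_{N/2−1}, Re Y_{N/2}, conj Y_{N/2−1}, …, conj Y_1)`. -/
noncomputable def PiInv (m : ℕ) (Y : Fin (m + 2) → ℂ) : Fin (2 * (m + 1)) → ℂ :=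
  fun i =>
    if h1 : i.val = 0 then ((Y ⟨0, by omega⟩).re : ℂ)
    else if h2 : i.val < m + 1 then Y ⟨i.val, by omega⟩
    else if h3 : i.val = m + 1 then ((Y ⟨m + 1, by omega⟩).re : ℂ)
    else (starRingEnd ℂ) (Y ⟨2 * (m + 1) - i.val, by have := i.isLt; omega⟩)

/-- The real discrete Fourier transform `RFT_N = Π_N ∘ D_N` for even `N = 2·(m+1)`. -/
noncomputable def RFT (m : ℕ) (x : Fin (2 * (m + 1)) → ℂ) : Fin (m + 2) → ℂ :=
  PiProj m ((Dmat (2 * (m + 1))).mulVec x)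

/-- The inverse real discrete Fourier transform `iRFT_N = D_N⁻¹ ∘ Π_N⁻¹`
for even `N = 2·(m+1)`. -/
noncomputable def iRFT (m : ℕ) (c : Fin (m + 2) → ℂ) : Fin (2 * (m + 1)) → ℂ :=
  (DmatInv (2 * (m + 1))).mulVec (PiInv m c)

/-- The FITS model (without low-pass filter), for `L = 2·(a+1)` and `T = 2·(b+1)`:
`x ↦ iRFT_{L+T}(W·RFT_L(x) + c) ∈ ℂ^{L+T}`.  Here `L+T = 2·((a+b+1)+1)`. -/
noncomputable def fits (a b : ℕ) (W : Matrix (Fin (a + b + 3)) (Fin (a + 2)) ℂ)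
    (c : Fin (a + b + 3) → ℂ) (x : Fin (2 * (a + 1)) → ℝ) : Fin (2 * (a + b + 2)) → ℂ :=
  iRFT (a + b + 1) (W.mulVec (RFT a fun k => (x k : ℂ)) + c)

/-- The forecast of the FITS model: the last `T = 2·(b+1)` coordinates of `fits`. -/
noncomputable def fitsT (a b : ℕ) (W : Matrix (Fin (a + b + 3)) (Fin (a + 2)) ℂ)
    (c : Fin (a + b + 3) → ℂ) (x : Fin (2 * (a + 1)) → ℝ) : Fin (2 * (b + 1)) → ℂ :=
  fun t => fits a b W c x ⟨2 * (a + 1) + t.val, by have := t.isLt; omega⟩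

/-! With `N = 2(m+1)` and `ω = exp(2πi/N)`, the Hermitian extension `Π_N⁻¹` makes `iRFT_N`
the real part of a one-sided sum: `iRFT_N(Z)_n = Re Σ_{k ≤ N/2} (w_k/N) ω^{nk} Z_k`, with
`w_k = 1` for `k ∈ {0, N/2}` and `w_k = 2` otherwise. Hence every forecast coordinate is
`Re (C W F x + C c)` for the fixed complex matrices `C` (those coefficients for the rows
`n = L, …, L+T-1` of `iRFT_{L+T}`) and `F` (the matrix of `RFT_L`), which is real-affine in `x`.

Conversely, the first `T` columns of `C` form a Vandermonde matrix in the distinct roots of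
unity `ω^{L+t}` times an invertible diagonal matrix; this is where `L ≥ T - 2`, i.e.
`T ≤ (L+T)/2 + 1`, is needed. A right inverse `R` of `C` gives `W = R H`, `c = R b`, and it
remains to write `A = Re (H F)`, which the inversion formula `iRFT_L ∘ RFT_L = id` on real
signals provides. -/

open Complex Matrix ZMod
open scoped ComplexConjugate

lemma Matrix.re_mulVec_ofReal {m n : Type*} [Fintype n] (M : Matrix m n ℂ) (x : n → ℝ)
    (i : m) :
    ((M *ᵥ fun j => (x j : ℂ)) i).re = (M.map re *ᵥ x) i := by
  simp [mulVec, dotProduct, re_sum]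

theorem Matrix.exists_mul_eq_one_of_isUnit_det_submatrix {m n R : Type*} [Fintype m] [Fintype n]
    [DecidableEq m] [DecidableEq n] [CommRing R] (A : Matrix m n R) (e : m → n)
    (h : IsUnit (A.submatrix id e).det) : ∃ B : Matrix n m R, A * B = 1 := by
  refine ⟨(1 : Matrix n n R).submatrix (Equiv.refl n) e * (A.submatrix id e)⁻¹, ?_⟩
  rw [← Matrix.mul_assoc, mul_submatrix_one, Equiv.refl_symm, Equiv.coe_refl, Function.id_comp,
    mul_nonsing_inv _ h]

section DFT

variable {N : ℕ} [NeZero N]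

lemma ZMod.val_finEquiv (j : Fin N) : (ZMod.finEquiv N j).val = j := by
  obtain ⟨n, rfl⟩ := Nat.exists_eq_succ_of_ne_zero (NeZero.ne N)
  rfl

lemma ZMod.finEquiv_apply (j : Fin N) : ZMod.finEquiv N j = ((j : ℕ) : ZMod N) := by
  rw [← ZMod.val_finEquiv, ZMod.natCast_zmod_val]

lemma ZMod.natCast_val_neg (k : Fin N) :
    (((-k : Fin N) : ℕ) : ZMod N) = -((k : ℕ) : ZMod N) := by
  rw [← ZMod.finEquiv_apply, ← ZMod.finEquiv_apply, map_neg]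

lemma Dmat_apply (j k : Fin N) :
    Dmat N j k = stdAddChar (-(((j : ℕ) : ZMod N) * ((k : ℕ) : ZMod N))) := by
  rw [← Nat.cast_mul, ← Int.cast_natCast, ← Int.cast_neg, stdAddChar_coe, Dmat, of_apply]
  push_cast
  ring_nf

lemma DmatInv_apply (j k : Fin N) :
    DmatInv N j k = (N : ℂ)⁻¹ * stdAddChar (((j : ℕ) : ZMod N) * ((k : ℕ) : ZMod N)) := by
  rw [DmatInv, Matrix.smul_apply, conjTranspose_apply, Dmat_apply, smul_eq_mul,
    ← starRingEnd_apply, ← AddChar.map_neg_eq_conj, neg_neg, mul_comm ((k : ℕ) : ZMod N)]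

lemma Dmat_mulVec (v : Fin N → ℂ) :
    Dmat N *ᵥ v = fun j => 𝓕 (v ∘ (ZMod.finEquiv N).symm) (ZMod.finEquiv N j) := by
  ext j
  rw [dft_apply]
  refine Fintype.sum_equiv (ZMod.finEquiv N).toEquiv _ _ fun k => ?_
  simp only [RingEquiv.toEquiv_eq_coe, EquivLike.coe_coe, Function.comp_apply,
    RingEquiv.symm_apply_apply, smul_eq_mul]
  rw [Dmat_apply, ZMod.finEquiv_apply, ZMod.finEquiv_apply, mul_comm ((k : ℕ) : ZMod N)]

lemma DmatInv_mulVec (u : Fin N → ℂ) :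
    DmatInv N *ᵥ u = fun j => 𝓕⁻ (u ∘ (ZMod.finEquiv N).symm) (ZMod.finEquiv N j) := by
  ext j
  rw [invDFT_apply, smul_eq_mul, Finset.mul_sum]
  refine Fintype.sum_equiv (ZMod.finEquiv N).toEquiv _ _ fun k => ?_
  simp only [RingEquiv.toEquiv_eq_coe, EquivLike.coe_coe, Function.comp_apply,
    RingEquiv.symm_apply_apply, smul_eq_mul]
  rw [DmatInv_apply, ZMod.finEquiv_apply, ZMod.finEquiv_apply, mul_comm ((k : ℕ) : ZMod N),
    mul_assoc]

lemma DmatInv_mulVec_Dmat_mulVec (v : Fin N → ℂ) : DmatInv N *ᵥ (Dmat N *ᵥ v) = v := by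
  ext j
  simp [DmatInv_mulVec, Dmat_mulVec, Function.comp_def]

lemma Dmat_mulVec_ofReal_neg (y : Fin N → ℝ) (j : Fin N) :
    (Dmat N *ᵥ fun k => (y k : ℂ)) (-j) = conj ((Dmat N *ᵥ fun k => (y k : ℂ)) j) := by
  simp only [mulVec, dotProduct, Dmat_apply, ZMod.natCast_val_neg, map_sum, map_mul,
    conj_ofReal, ← AddChar.map_neg_eq_conj, neg_mul]

end DFT

section RealDFT

variable (m : ℕ)

def rfftWeight (k : Fin (m + 2)) : ℝ := if (k : ℕ) = 0 ∨ (k : ℕ) = m + 1 then 1 else 2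

lemma rfftWeight_ne_zero (k : Fin (m + 2)) : rfftWeight m k ≠ 0 := by
  unfold rfftWeight
  split_ifs <;> norm_num

noncomputable def weightedExtend (Z : Fin (m + 2) → ℂ) (k : ℕ) : ℂ :=
  if h : k < m + 2 then rfftWeight m ⟨k, h⟩ * Z ⟨k, h⟩ else 0

lemma PiInv_eq_weightedExtend (Z : Fin (m + 2) → ℂ) (k : Fin (2 * (m + 1))) :
    PiInv m Z k = (weightedExtend m Z k + conj (weightedExtend m Z (-k : Fin _))) / 2 := by
  have hk := k.isLt
  have hneg : ((-k : Fin _) : ℕ) = (2 * (m + 1) - k) % (2 * (m + 1)) := Fin.val_neg' k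
  unfold PiInv
  split_ifs with h0 hlow hmid
  · have : ((-k : Fin _) : ℕ) = 0 := by simp [hneg, h0]
    simp [weightedExtend, rfftWeight, this, h0, add_conj]
  · have : ((-k : Fin _) : ℕ) = 2 * (m + 1) - k := by
      rw [hneg, Nat.mod_eq_of_lt (by omega)]
    simp [weightedExtend, rfftWeight, this, h0, show (k : ℕ) < m + 2 by omega,
      show (k : ℕ) ≠ m + 1 by omega, show ¬ 2 * (m + 1) - k < m + 2 by omega]
  · have : ((-k : Fin _) : ℕ) = m + 1 := by
      rw [hneg, Nat.mod_eq_of_lt (by omega)]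
      omega
    simp [weightedExtend, rfftWeight, this, hmid, add_conj]
  · have : ((-k : Fin _) : ℕ) = 2 * (m + 1) - k := by
      rw [hneg, Nat.mod_eq_of_lt (by omega)]
    simp [weightedExtend, rfftWeight, this, show ¬ (k : ℕ) < m + 2 by omega,
      show 2 * (m + 1) - k < m + 2 by omega, show 2 * (m + 1) - k ≠ 0 by omega,
      show 2 * (m + 1) - k ≠ m + 1 by omega, map_ofNat]

noncomputable def iRFTCoeff (n : Fin (2 * (m + 1))) (k : Fin (m + 2)) : ℂ :=
  rfftWeight m k / ((2 * (m + 1) : ℕ) : ℂ) *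
    stdAddChar (((n : ℕ) : ZMod (2 * (m + 1))) * ((k : ℕ) : ZMod (2 * (m + 1))))

lemma inv_mul_sum_stdAddChar_mul_weightedExtend (Z : Fin (m + 2) → ℂ) (n : Fin (2 * (m + 1))) :
    ((2 * (m + 1) : ℕ) : ℂ)⁻¹ * ∑ k : Fin (2 * (m + 1)),
        stdAddChar (((n : ℕ) : ZMod (2 * (m + 1))) * ((k : ℕ) : ZMod (2 * (m + 1)))) *
          weightedExtend m Z k =
      ∑ k, iRFTCoeff m n k * Z k := by
  rw [Finset.mul_sum]
  symm
  refine Fintype.sum_of_injective (Fin.castLE (by omega)) (Fin.castLE_injective _) _ _ ?_ ?_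
  · intro k hk
    have : ¬ (k : ℕ) < m + 2 := fun h => hk ⟨⟨k, h⟩, rfl⟩
    simp [weightedExtend, this]
  · intro k
    simp only [iRFTCoeff, weightedExtend, Fin.val_castLE, dif_pos k.isLt, Fin.eta]
    ring

theorem iRFT_apply (Z : Fin (m + 2) → ℂ) (n : Fin (2 * (m + 1))) :
    iRFT m Z n = ((∑ k, iRFTCoeff m n k * Z k).re : ℂ) := by
  set s := ∑ k : Fin (2 * (m + 1)),
    stdAddChar (((n : ℕ) : ZMod (2 * (m + 1))) * ((k : ℕ) : ZMod (2 * (m + 1)))) *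
      weightedExtend m Z k
  have hconj : ∑ k : Fin (2 * (m + 1)),
      stdAddChar (((n : ℕ) : ZMod (2 * (m + 1))) * ((k : ℕ) : ZMod (2 * (m + 1)))) *
        conj (weightedExtend m Z (-k : Fin _)) = conj s := by
    rw [map_sum]
    refine Fintype.sum_equiv (Equiv.neg _) _ _ fun k => ?_
    simp [ZMod.natCast_val_neg, AddChar.map_neg_eq_conj]
  rw [← inv_mul_sum_stdAddChar_mul_weightedExtend]
  calc iRFT m Z n
      = (((2 * (m + 1) : ℕ) : ℂ)⁻¹ * s + ((2 * (m + 1) : ℕ) : ℂ)⁻¹ * conj s) / 2 := by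
        rw [← hconj, iRFT, mulVec, dotProduct, Finset.mul_sum, Finset.mul_sum,
          ← Finset.sum_add_distrib, Finset.sum_div]
        refine Finset.sum_congr rfl fun k _ => ?_
        rw [DmatInv_apply, PiInv_eq_weightedExtend]
        ring
    _ = ((((2 * (m + 1) : ℕ) : ℂ)⁻¹ * s).re : ℂ) := by
        have hreal :
            conj (((2 * (m + 1) : ℕ) : ℂ)⁻¹ * s) = ((2 * (m + 1) : ℕ) : ℂ)⁻¹ * conj s := by
          rw [map_mul, map_inv₀, map_natCast]
        rw [← hreal, add_conj]
        push_cast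
        ring

lemma PiInv_PiProj {Y : Fin (2 * (m + 1)) → ℂ} (hY : ∀ k, Y (-k) = conj (Y k)) :
    PiInv m (PiProj m Y) = Y := by
  ext k
  have hk := k.isLt
  have hneg : ((-k : Fin _) : ℕ) = (2 * (m + 1) - k) % (2 * (m + 1)) := Fin.val_neg' k
  unfold PiInv PiProj
  split_ifs with h0 hlow hmid
  · rw [show (⟨0, _⟩ : Fin (2 * (m + 1))) = k from Fin.ext h0.symm, ← conj_eq_iff_re, ← hY]
    exact congrArg Y (Fin.ext (by simp [hneg, h0]))
  · rfl
  · rw [show (⟨m + 1, _⟩ : Fin (2 * (m + 1))) = k from Fin.ext hmid.symm, ← conj_eq_iff_re,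
      ← hY]
    refine congrArg Y (Fin.ext ?_)
    rw [hneg, Nat.mod_eq_of_lt (by omega)]
    omega
  · rw [show (⟨2 * (m + 1) - k, _⟩ : Fin (2 * (m + 1))) = -k from
      Fin.ext (by rw [hneg, Nat.mod_eq_of_lt (by omega)]), ← hY, neg_neg]

theorem iRFT_RFT_ofReal (y : Fin (2 * (m + 1)) → ℝ) :
    iRFT m (RFT m fun k => (y k : ℂ)) = fun k => (y k : ℂ) := by
  rw [iRFT, RFT, PiInv_PiProj m (Dmat_mulVec_ofReal_neg y), DmatInv_mulVec_Dmat_mulVec]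

noncomputable def rftMatrix : Matrix (Fin (m + 2)) (Fin (2 * (m + 1))) ℂ :=
  (Dmat (2 * (m + 1))).submatrix (Fin.castLE (by omega)) id

lemma conj_iRFTCoeff (n : Fin (2 * (m + 1))) (k : Fin (m + 2)) :
    conj (iRFTCoeff m n k) = rfftWeight m k / ((2 * (m + 1) : ℕ) : ℂ) * rftMatrix m k n := by
  rw [iRFTCoeff, rftMatrix, submatrix_apply, id, Dmat_apply, map_mul, map_div₀, conj_ofReal,
    map_natCast, ← AddChar.map_neg_eq_conj, Fin.val_castLE,
    mul_comm ((n : ℕ) : ZMod (2 * (m + 1)))]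

theorem exists_re_mul_rftMatrix_eq {ι : Type*} (A : Matrix ι (Fin (2 * (m + 1))) ℝ) :
    ∃ H : Matrix ι (Fin (m + 2)) ℂ, (H * rftMatrix m).map re = A := by
  refine ⟨of fun t k => rfftWeight m k / ((2 * (m + 1) : ℕ) : ℂ) *
    conj (RFT m (fun p => (A t p : ℂ)) k), ?_⟩
  ext t p
  have h := congrFun (iRFT_RFT_ofReal m (A t)) p
  rw [iRFT_apply] at h
  rw [map_apply, mul_apply, ← ofReal_inj.1 h]
  conv_rhs => rw [← conj_re, map_sum]
  refine congrArg re (Finset.sum_congr rfl fun k _ => ?_)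
  rw [map_mul, conj_iRFTCoeff, of_apply]
  ring

end RealDFT

section FITS

variable (a b : ℕ)

noncomputable def forecastMatrix : Matrix (Fin (2 * (b + 1))) (Fin (a + b + 3)) ℂ :=
  of fun t k => iRFTCoeff (a + b + 1) ⟨2 * (a + 1) + t, by omega⟩ k

theorem fitsT_eq (W : Matrix (Fin (a + b + 3)) (Fin (a + 2)) ℂ) (c : Fin (a + b + 3) → ℂ)
    (x : Fin (2 * (a + 1)) → ℝ) (t : Fin (2 * (b + 1))) :
    fitsT a b W c x t = ((((forecastMatrix a b * W * rftMatrix a).map re *ᵥ x) t +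
      ((forecastMatrix a b *ᵥ c) t).re : ℝ) : ℂ) := by
  have h : fitsT a b W c x t = ((forecastMatrix a b *ᵥ
      (W *ᵥ (rftMatrix a *ᵥ fun k => (x k : ℂ)) + c)) t).re :=
    iRFT_apply _ _ _
  rw [h, mulVec_add, mulVec_mulVec, mulVec_mulVec, Pi.add_apply, add_re, re_mulVec_ofReal]

theorem fits_im (W : Matrix (Fin (a + b + 3)) (Fin (a + 2)) ℂ) (c : Fin (a + b + 3) → ℂ)
    (x : Fin (2 * (a + 1)) → ℝ) (i : Fin (2 * (a + b + 2))) : (fits a b W c x i).im = 0 := by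
  rw [fits, iRFT_apply, ofReal_im]

lemma isUnit_det_forecastMatrix_submatrix (hT : 2 * (b + 1) ≤ a + b + 3) :
    IsUnit ((forecastMatrix a b).submatrix id (Fin.castLE hT)).det := by
  have hfac : (forecastMatrix a b).submatrix id (Fin.castLE hT) =
      vandermonde (fun t : Fin (2 * (b + 1)) =>
        stdAddChar (((2 * (a + 1) + t : ℕ) : ZMod (2 * (a + b + 1 + 1))))) *
      diagonal fun s => (rfftWeight (a + b + 1) (Fin.castLE hT s) : ℂ) /
        ((2 * (a + b + 1 + 1) : ℕ) : ℂ) := by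
    ext t s
    rw [submatrix_apply, mul_diagonal, vandermonde_apply, forecastMatrix, of_apply, iRFTCoeff,
      ← AddChar.map_nsmul_eq_pow, nsmul_eq_mul, Fin.val_castLE,
      mul_comm ((s : ℕ) : ZMod (2 * (a + b + 1 + 1)))]
    simp only [id]
    ring
  rw [hfac, isUnit_iff_ne_zero, det_mul, det_diagonal]
  refine mul_ne_zero (det_vandermonde_ne_zero_iff.2 fun t t' h => ?_)
    (Finset.prod_ne_zero_iff.2 fun s _ => div_ne_zero (ofReal_ne_zero.2 (rfftWeight_ne_zero _ _))
      (Nat.cast_ne_zero.2 (by omega)))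
  have := injective_stdAddChar h
  rw [ZMod.natCast_eq_natCast_iff', Nat.mod_eq_of_lt (by omega),
    Nat.mod_eq_of_lt (by omega)] at this
  exact Fin.ext (by omega)

theorem exists_fitsT_eq_affine (W : Matrix (Fin (a + b + 3)) (Fin (a + 2)) ℂ)
    (c : Fin (a + b + 3) → ℂ) :
    ∃ (A : Matrix (Fin (2 * (b + 1))) (Fin (2 * (a + 1))) ℝ) (bv : Fin (2 * (b + 1)) → ℝ),
      ∀ x t, fitsT a b W c x t = ((A.mulVec x t + bv t : ℝ) : ℂ) :=
  ⟨_, _, fitsT_eq a b W c⟩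

theorem exists_fitsT_eq_affine_of_le (hab : b ≤ a + 1)
    (A : Matrix (Fin (2 * (b + 1))) (Fin (2 * (a + 1))) ℝ) (bv : Fin (2 * (b + 1)) → ℝ) :
    ∃ (W : Matrix (Fin (a + b + 3)) (Fin (a + 2)) ℂ) (c : Fin (a + b + 3) → ℂ),
      ∀ x t, fitsT a b W c x t = ((A.mulVec x t + bv t : ℝ) : ℂ) := by
  obtain ⟨R, hR⟩ := (forecastMatrix a b).exists_mul_eq_one_of_isUnit_det_submatrix _
    (isUnit_det_forecastMatrix_submatrix a b (by omega))
  obtain ⟨H, hH⟩ := exists_re_mul_rftMatrix_eq a A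
  refine ⟨R * H, R *ᵥ fun t => (bv t : ℂ), fun x t => ?_⟩
  rw [fitsT_eq, ← Matrix.mul_assoc, hR, Matrix.one_mul, hH, mulVec_mulVec, hR, one_mulVec,
    ofReal_re]

end FITS

/-- for even `L = 2·(a+1)` and `T = 2·(b+1)` with `L ≥ T − 2`, the FITS
model class (without low-pass filter) is exactly the set of affine maps `ℝ^L → ℝ^T`:
(i) every FITS model has real outputs and equals `x ↦ Ax + b`;
(ii) every affine map `x ↦ Ax + b` is realized by some FITS model. -/
theorem fits_model_class (a b : ℕ) (hLT : 2 * (a + 1) ≥ 2 * (b + 1) - 2) :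
    (∀ (W : Matrix (Fin (a + b + 3)) (Fin (a + 2)) ℂ) (c : Fin (a + b + 3) → ℂ),
      (∀ (x : Fin (2 * (a + 1)) → ℝ) (i : Fin (2 * (a + b + 2))),
        (fits a b W c x i).im = 0) ∧
      ∃ (A : Matrix (Fin (2 * (b + 1))) (Fin (2 * (a + 1))) ℝ) (bv : Fin (2 * (b + 1)) → ℝ),
        ∀ x t, fitsT a b W c x t = ((A.mulVec x t + bv t : ℝ) : ℂ)) ∧
    (∀ (A : Matrix (Fin (2 * (b + 1))) (Fin (2 * (a + 1))) ℝ) (bv : Fin (2 * (b + 1)) → ℝ),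
      ∃ (W : Matrix (Fin (a + b + 3)) (Fin (a + 2)) ℂ) (c : Fin (a + b + 3) → ℂ),
        ∀ x t, fitsT a b W c x t = ((A.mulVec x t + bv t : ℝ) : ℂ)) :=
  ⟨fun W c => ⟨fits_im a b W c, exists_fitsT_eq_affine a b W c⟩,
    exists_fitsT_eq_affine_of_le a b (by omega)⟩
end

section
/- Let L and T be even positive integers. Let f : ℝ^L → ℂ^{L+T} be the FITS model f(x) = iRFT_{L+T}(W·RFT_L(x) + c), where W is a complex ((L+T)/2 + 1) × (L/2 + 1) matrix and c ∈ ℂ^{(L+T)/2+1}. Then for all x ∈ ℝ^L, f(x) = (D_{L+T}^{-1} ∘ Π_{L+T}^{-1} ∘ W ∘ Π_L ∘ D_L)(x) + iRFT_{L+T}(c); in particular f(0) = iRFT_{L+T}(c) and x ↦ f(x) − f(0) is ℝ-linear in x. -/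
lemma PiInv_add (m : ℕ) (Y Z : Fin (m + 2) → ℂ) :
    PiInv m (Y + Z) = PiInv m Y + PiInv m Z := by
  funext i
  simp only [PiInv, Pi.add_apply]
  split_ifs <;> simp [Complex.add_re, map_add]

lemma PiInv_zero (m : ℕ) : PiInv m 0 = 0 := by
  funext i
  simp only [PiInv, Pi.zero_apply]
  split_ifs <;> simp

lemma PiInv_smul (m : ℕ) (r : ℝ) (Y : Fin (m + 2) → ℂ) :
    PiInv m ((r : ℂ) • Y) = (r : ℂ) • PiInv m Y := by
  funext i
  simp only [PiInv, Pi.smul_apply, smul_eq_mul]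
  split_ifs <;>
    simp [Complex.mul_re, Complex.ofReal_mul, map_mul, Complex.conj_ofReal, mul_comm]

/-- the FITS model `f(x) = iRFT_{L+T}(W·RFT_L(x) + c)` satisfies
`f(x) = (D_{L+T}⁻¹ ∘ Π_{L+T}⁻¹ ∘ W ∘ Π_L ∘ D_L)(x) + iRFT_{L+T}(c)`; in particular
`f(0) = iRFT_{L+T}(c)` and `x ↦ f(x) − f(0)` is ℝ-linear.
Here `L = 2·(a+1)`, `T = 2·(b+1)`, `L+T = 2·((a+b+1)+1)`. -/
theorem fits_affine_decomposition (a b : ℕ)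
    (W : Matrix (Fin (a + b + 3)) (Fin (a + 2)) ℂ) (c : Fin (a + b + 3) → ℂ)
    (f : (Fin (2 * (a + 1)) → ℝ) → (Fin (2 * (a + b + 2)) → ℂ))
    (hf : ∀ x, f x = iRFT (a + b + 1) (W.mulVec (RFT a fun k => (x k : ℂ)) + c)) :
    (∀ x, f x =
        (DmatInv (2 * (a + b + 2))).mulVec
          (PiInv (a + b + 1)
            (W.mulVec (PiProj a ((Dmat (2 * (a + 1))).mulVec fun k => (x k : ℂ)))))
        + iRFT (a + b + 1) c) ∧
    f 0 = iRFT (a + b + 1) c ∧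
    IsLinearMap ℝ (fun x => f x - f 0) := by
  have key : ∀ x : Fin (2 * (a + 1)) → ℝ, f x =
      (DmatInv (2 * (a + b + 2))).mulVec
        (PiInv (a + b + 1)
          (W.mulVec (PiProj a ((Dmat (2 * (a + 1))).mulVec fun k => (x k : ℂ)))))
      + iRFT (a + b + 1) c := by
    intro x
    rw [hf x]
    show (DmatInv (2 * (a + b + 2))).mulVec
        (PiInv (a + b + 1) (W.mulVec (RFT a fun k => (x k : ℂ)) + c)) = _
    rw [PiInv_add, Matrix.mulVec_add]
    rfl
  have hzero : (PiProj a ((Dmat (2 * (a + 1))).mulVec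
      fun k => (((0 : Fin (2 * (a + 1)) → ℝ) k : ℂ)))) = 0 := by
    have : (fun k : Fin (2 * (a + 1)) => (((0 : Fin (2 * (a + 1)) → ℝ) k : ℂ))) = 0 := by
      funext k; simp
    rw [this, Matrix.mulVec_zero]
    rfl
  have hf0 : f 0 = iRFT (a + b + 1) c := by
    rw [key 0, hzero, Matrix.mulVec_zero, PiInv_zero, Matrix.mulVec_zero, zero_add]
  refine ⟨key, hf0, ?_⟩
  have hg : (fun x => f x - f 0) = fun x =>
      (DmatInv (2 * (a + b + 2))).mulVec
        (PiInv (a + b + 1)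
          (W.mulVec (PiProj a ((Dmat (2 * (a + 1))).mulVec fun k => (x k : ℂ))))) := by
    funext x
    rw [key x, hf0]
    abel
  rw [hg]
  constructor
  · intro x y
    have h1 : (fun k : Fin (2 * (a + 1)) => (((x + y) k : ℝ) : ℂ)) =
        (fun k => ((x k : ℝ) : ℂ)) + fun k => ((y k : ℝ) : ℂ) := by
      funext k; simp
    rw [h1, Matrix.mulVec_add]
    have h2 : PiProj a ((Dmat (2 * (a + 1))).mulVec fun k => ((x k : ℝ) : ℂ))
        + PiProj a ((Dmat (2 * (a + 1))).mulVec fun k => ((y k : ℝ) : ℂ))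
        = PiProj a (((Dmat (2 * (a + 1))).mulVec fun k => ((x k : ℝ) : ℂ))
          + (Dmat (2 * (a + 1))).mulVec fun k => ((y k : ℝ) : ℂ)) := rfl
    rw [← h2, Matrix.mulVec_add, PiInv_add, Matrix.mulVec_add]
  · intro r x
    have h1 : (fun k : Fin (2 * (a + 1)) => (((r • x) k : ℝ) : ℂ)) =
        (r : ℂ) • fun k => ((x k : ℝ) : ℂ) := by
      funext k; simp [Complex.ofReal_mul]
    rw [h1, Matrix.mulVec_smul]
    have h2 : PiProj a ((r : ℂ) • (Dmat (2 * (a + 1))).mulVec fun k => ((x k : ℝ) : ℂ))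
        = (r : ℂ) • PiProj a ((Dmat (2 * (a + 1))).mulVec fun k => ((x k : ℝ) : ℂ)) := rfl
    rw [h2, Matrix.mulVec_smul, PiInv_smul, Matrix.mulVec_smul]
    funext i
    simp [Complex.real_smul]
end

section
/- Let L and T be even positive integers and let W be a complex ((L+T)/2 + 1) × (L/2 + 1) matrix, with rows of W indexed by 0 ≤ i ≤ (L+T)/2 and columns by 0 ≤ j ≤ L/2. Define the complex (L+T) × L matrix T(W) entrywise as follows (rows 0 ≤ i ≤ L+T−1, columns 0 ≤ j ≤ L−1): for i ∈ {0, (L+T)/2}: T(W)_{i,0} = Re(W_{i,0}), T(W)_{i,L/2} = Re(W_{i,L/2}), T(W)_{i,j} = W_{i,j}/2 for 0 < j < L/2, and T(W)_{i,j} = conj(W_{i,L−j})/2 for j > L/2; for 0 < i < (L+T)/2: T(W)_{i,j} = W_{i,j} for j ≤ L/2 and T(W)_{i,j} = 0 for j > L/2; for i > (L+T)/2: T(W)_{i,0} = conj(W_{L+T−i,0}), T(W)_{i,j} = conj(W_{L+T−i,L−j}) for j ≥ L/2, and T(W)_{i,j} = 0 for 0 < j < L/2. Then for every x ∈ ℝ^L,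 setting Y = D_L·x, one has Π_{L+T}^{-1}(W·(Π_L·Y)) = T(W)·Y. -/
/-- The matrix `T(W)` of Lemma `matrix_charac` (STATEMENT 7), defined entrywise from the
complex `((L+T)/2+1) × (L/2+1)` matrix `W`, where `L = 2·(a+1)`, `T = 2·(b+1)`,
so `(L+T)/2 = a+b+2` and `L/2 = a+1`. -/
noncomputable def TW (a b : ℕ) (W : Matrix (Fin (a + b + 3)) (Fin (a + 2)) ℂ) :
    Matrix (Fin (2 * (a + b + 2))) (Fin (2 * (a + 1))) ℂ :=
  Matrix.of fun i j =>
    if hi : i.val = 0 ∨ i.val = a + b + 2 then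
      if hj0 : j.val = 0 then ((W ⟨i.val, by omega⟩ ⟨0, by omega⟩).re : ℂ)
      else if hjh : j.val = a + 1 then ((W ⟨i.val, by omega⟩ ⟨a + 1, by omega⟩).re : ℂ)
      else if hjlt : j.val < a + 1 then W ⟨i.val, by omega⟩ ⟨j.val, by omega⟩ / 2
      else (starRingEnd ℂ)
        (W ⟨i.val, by omega⟩ ⟨2 * (a + 1) - j.val, by have := j.isLt; omega⟩) / 2
    else if hi2 : i.val < a + b + 2 then
      if hj : j.val ≤ a + 1 then W ⟨i.val, by omega⟩ ⟨j.val, by omega⟩ else 0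
    else
      if hj0 : j.val = 0 then
        (starRingEnd ℂ) (W ⟨2 * (a + b + 2) - i.val, by have := i.isLt; omega⟩ ⟨0, by omega⟩)
      else if hj : a + 1 ≤ j.val then
        (starRingEnd ℂ) (W ⟨2 * (a + b + 2) - i.val, by have := i.isLt; omega⟩
          ⟨2 * (a + 1) - j.val, by have := j.isLt; omega⟩)
      else 0

/-!
Since `x` is real, `Y = D_L x` is Hermitian symmetric: `conj Y_k = Y_{-k}` (indices mod `L`).
Entry `i` of `W (Π_L Y)` is `s_i = ∑_k w_k Y_k`, where `w` is row `i` of `W` padded by zeros to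
length `L`. For `0 < i < (L+T)/2` this is row `i` of `T(W)` applied to `Y`. For `i > (L+T)/2`,
`Π⁻¹` takes `conj s_{L+T-i}`, and reindexing `k ↦ -k` gives
`conj (∑ w_k Y_k) = ∑ conj (w_{-k}) Y_k`.
On the two rows where `Π⁻¹` takes real parts, `Re s = (s + conj s)/2` is therefore the row
`(w_k + conj w_{-k}) / 2` applied to `Y`. These three kinds of rows are exactly the rows of `T(W)`.
-/

open ComplexConjugate

theorem conj_Dmat_apply_of_dvd {N : ℕ} (j j' k : Fin N) (h : N ∣ j.val + j'.val) :
    conj (Dmat N j k) = Dmat N j' k := by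
  obtain ⟨n, hn⟩ := h
  have hN : (N : ℂ) ≠ 0 := Nat.cast_ne_zero.mpr (by rintro rfl; exact k.elim0)
  have hsum : ((j : ℕ) : ℂ) + ((j' : ℕ) : ℂ) = N * n := by exact_mod_cast hn
  simp only [Dmat, Matrix.of_apply, ← Complex.exp_conj, map_div₀, map_neg, map_mul,
    Complex.conj_ofReal, Complex.conj_I, map_ofNat, map_natCast]
  have harg : -(2 * (Real.pi : ℂ) * -Complex.I * (j : ℕ) * (k : ℕ)) / N =
      -(2 * (Real.pi : ℂ) * Complex.I * (j' : ℕ) * (k : ℕ)) / N +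
        ((n * k.val : ℕ) : ℤ) * (2 * Real.pi * Complex.I) := by
    push_cast
    field_simp
    linear_combination ((k : ℕ) : ℂ) * hsum
  rw [harg, Complex.exp_add, Complex.exp_int_mul_two_pi_mul_I, mul_one]

theorem conj_Dmat_apply {N : ℕ} [NeZero N] (j k : Fin N) : conj (Dmat N j k) = Dmat N (-j) k :=
  conj_Dmat_apply_of_dvd j (-j) k <| Nat.dvd_of_mod_eq_zero <| by
    rw [← Fin.val_add, add_neg_cancel, Fin.val_zero]

theorem conj_Dmat_mulVec_ofReal {N : ℕ} [NeZero N] (x : Fin N → ℝ) (j : Fin N) :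
    conj ((Dmat N).mulVec (fun k => (x k : ℂ)) j) =
      (Dmat N).mulVec (fun k => (x k : ℂ)) (-j) := by
  simp only [Matrix.mulVec, dotProduct, map_sum, map_mul, Complex.conj_ofReal, conj_Dmat_apply]

section Reflection

variable {ι : Type*} [Fintype ι] [InvolutiveNeg ι] {Y : ι → ℂ}

theorem sum_conj_neg_mul (hY : ∀ k, conj (Y k) = Y (-k)) (c : ι → ℂ) :
    ∑ k, conj (c (-k)) * Y k = conj (∑ k, c k * Y k) := by
  rw [← Equiv.sum_comp (Equiv.neg ι) (fun k => conj (c (-k)) * Y k)]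
  simp only [Equiv.neg_apply, neg_neg, map_sum, map_mul, hY]

theorem sum_re_mul (hY : ∀ k, conj (Y k) = Y (-k)) (c : ι → ℂ) :
    ∑ k, (c k + conj (c (-k))) / 2 * Y k = ((∑ k, c k * Y k).re : ℂ) := by
  simp only [add_div, add_mul, Finset.sum_add_distrib, div_mul_eq_mul_div, ← Finset.sum_div,
    sum_conj_neg_mul hY, Complex.re_eq_add_conj]

end Reflection

def padZero {α : Type*} [Zero α] {m n : ℕ} (w : Fin m → α) (k : Fin n) : α :=
  if h : k.val < m then w ⟨k, h⟩ else 0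

theorem sum_padZero_mul {R : Type*} [NonUnitalNonAssocSemiring R] {m n : ℕ} (h : m ≤ n)
    (w : Fin m → R) (Y : Fin n → R) :
    ∑ k, padZero w k * Y k = ∑ j, w j * Y (Fin.castLE h j) := by
  refine (Fintype.sum_of_injective (Fin.castLE h) (Fin.castLE_injective h) _ _ ?_ ?_).symm
  · intro k hk
    have : ¬ k.val < m := fun hlt => hk ⟨⟨k, hlt⟩, rfl⟩
    simp [padZero, this]
  · intro j
    simp [padZero]

theorem mulVec_PiProj {ι : Type*} {a : ℕ} (W : Matrix ι (Fin (a + 2)) ℂ)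
    (Y : Fin (2 * (a + 1)) → ℂ) (r : ι) :
    W.mulVec (PiProj a Y) r = ∑ k, padZero (W r) k * Y k :=
  (sum_padZero_mul (m := a + 2) (n := 2 * (a + 1)) (by omega) (W r) Y).symm

section TW

variable {a b : ℕ} (W : Matrix (Fin (a + b + 3)) (Fin (a + 2)) ℂ) {i : Fin (2 * (a + b + 2))}

theorem TW_apply_of_boundary (hi : i.val = 0 ∨ i.val = a + b + 2) (k : Fin (2 * (a + 1))) :
    TW a b W i k =
      (padZero (W ⟨i, by omega⟩) k + conj (padZero (W ⟨i, by omega⟩) (-k))) / 2 := by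
  rcases k with ⟨k, hk⟩
  simp only [TW, Matrix.of_apply, dif_pos hi, padZero, Fin.val_neg, Fin.ext_iff, Fin.val_zero]
  split_ifs <;> (try omega) <;>
    (try simp only [Complex.re_eq_add_conj, map_zero, add_zero, zero_add])
  all_goals subst_vars; simp [two_mul]

theorem TW_apply_of_lt (hi0 : i.val ≠ 0) (hi : i.val < a + b + 2) (k : Fin (2 * (a + 1))) :
    TW a b W i k = padZero (W ⟨i, by omega⟩) k := by
  simp only [TW, Matrix.of_apply, padZero,
    dif_neg (show ¬(i.val = 0 ∨ i.val = a + b + 2) by omega), dif_pos hi]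
  split_ifs <;> first | rfl | omega

theorem TW_apply_of_gt (hi : a + b + 2 < i.val) (k : Fin (2 * (a + 1))) :
    TW a b W i k = conj (padZero (W ⟨2 * (a + b + 2) - i, by omega⟩) (-k)) := by
  rcases k with ⟨k, hk⟩
  simp only [TW, Matrix.of_apply, dif_neg (show ¬(i.val = 0 ∨ i.val = a + b + 2) by omega),
    dif_neg (show ¬ i.val < a + b + 2 by omega), padZero, Fin.val_neg, Fin.ext_iff, Fin.val_zero]
  split_ifs <;> first | omega | simp

end TW

/-- for every real `x ∈ ℝ^L`, setting `Y = D_L·x`, one has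
`Π_{L+T}⁻¹(W·(Π_L·Y)) = T(W)·Y`. -/
theorem fits_matrix_characterisation (a b : ℕ)
    (W : Matrix (Fin (a + b + 3)) (Fin (a + 2)) ℂ) (x : Fin (2 * (a + 1)) → ℝ)
    (Y : Fin (2 * (a + 1)) → ℂ) (hY : Y = (Dmat (2 * (a + 1))).mulVec fun k => (x k : ℂ)) :
    PiInv (a + b + 1) (W.mulVec (PiProj a Y)) = (TW a b W).mulVec Y := by
  have hsymm : ∀ k, conj (Y k) = Y (-k) := hY ▸ conj_Dmat_mulVec_ofReal x
  funext ⟨i, hi⟩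
  simp only [PiInv, mulVec_PiProj]
  simp only [Matrix.mulVec, dotProduct]
  split_ifs with h0 hlt hmid
  · subst h0
    simp only [TW_apply_of_boundary W (i := ⟨0, hi⟩) (Or.inl rfl), sum_re_mul hsymm]
  · simp only [TW_apply_of_lt W (i := ⟨i, hi⟩) h0 hlt]
  · subst hmid
    simp only [TW_apply_of_boundary W (i := ⟨_, hi⟩) (Or.inr rfl), sum_re_mul hsymm]
  · simp only [TW_apply_of_gt W (i := ⟨i, hi⟩) (show a + b + 2 < i by omega),
      sum_conj_neg_mul hsymm]
end

section
/- Fix integers L ≥ 2 and T ≥ 1, a T×L real matrix A and a vector b ∈ ℝ^T, and let f : ℝ^L → ℝ^T be given by f(x) = A·x + σ(x)·b, where σ(x) = sqrt((1/L)·∑_{i=1}^L (x_i − μ(x))²) is the population standard deviation and μ(x) the mean of x. Let e_i denote the i-th standard basis vector of ℝ^L and 1_L the all-ones vector. Then σ(1_L) = 0, σ((L/√(L−1))·e_i) = 1 for each i, and (√(L−1)/L)·∑_{i=1}^L f((L/√(L−1))·e_i) − f(1_L) = √(L−1)·b. -/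
/-- for `f(x) = A·x + σ(x)·b` with `L ≥ 2`, one has `σ(1_L) = 0`,
`σ((L/√(L−1))·e_i) = 1` for each `i`, and
`(√(L−1)/L)·∑_i f((L/√(L−1))·e_i) − f(1_L) = √(L−1)·b`. -/
theorem bias_extraction (L T : ℕ) (hL : 2 ≤ L) (hT : 1 ≤ T)
    (A : Matrix (Fin T) (Fin L) ℝ) (b : Fin T → ℝ)
    (f : (Fin L → ℝ) → (Fin T → ℝ))
    (hf : ∀ x, f x = A.mulVec x + sdev L x • b) :
    sdev L (fun _ => 1) = 0 ∧
    (∀ i : Fin L,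
      sdev L (((L : ℝ) / Real.sqrt ((L : ℝ) - 1)) • (Pi.single i 1 : Fin L → ℝ)) = 1) ∧
    (Real.sqrt ((L : ℝ) - 1) / L) •
        (∑ i : Fin L, f (((L : ℝ) / Real.sqrt ((L : ℝ) - 1)) • (Pi.single i 1 : Fin L → ℝ))) -
        f (fun _ => 1)
      = Real.sqrt ((L : ℝ) - 1) • b := by
  have hL2 : (2:ℝ) ≤ (L:ℝ) := by exact_mod_cast hL
  have hL0 : (L:ℝ) ≠ 0 := by linarith
  have hL1 : (0:ℝ) < (L:ℝ) - 1 := by linarith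
  set s := Real.sqrt ((L:ℝ) - 1) with hs
  have hspos : 0 < s := Real.sqrt_pos.mpr hL1
  have hs0 : s ≠ 0 := ne_of_gt hspos
  have hsq : s ^ 2 = (L:ℝ) - 1 := Real.sq_sqrt hL1.le
  set c := (L:ℝ) / s with hc
  -- part 1
  have hm1 : mea L (fun _ => 1) = 1 := by
    simp [mea, Finset.sum_const, hL0]
  have h1 : sdev L (fun _ => 1) = 0 := by
    simp [sdev, hm1]
  -- part 2
  have hmea : ∀ i : Fin L, mea L (c • (Pi.single i 1 : Fin L → ℝ)) = c / L := by
    intro i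
    simp only [mea, Pi.smul_apply, Pi.single_apply, smul_eq_mul, mul_ite, mul_one, mul_zero,
      Finset.sum_ite_eq', Finset.mem_univ, if_true]
  have hsum : ∀ i : Fin L,
      (∑ j, ((c • (Pi.single i 1 : Fin L → ℝ)) j - c / L) ^ 2)
        = (c - c / L) ^ 2 + ((L:ℝ) - 1) * (c / L) ^ 2 := by
    intro i
    rw [← Finset.add_sum_erase _ _ (Finset.mem_univ i)]
    have : ∀ j ∈ Finset.univ.erase i,
        ((c • (Pi.single i 1 : Fin L → ℝ)) j - c / L) ^ 2 = (c / L) ^ 2 := by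
      intro j hj
      have hne : j ≠ i := Finset.ne_of_mem_erase hj
      simp [Pi.single_eq_of_ne hne]
    rw [Finset.sum_congr rfl this, Finset.sum_const, Finset.card_erase_of_mem (Finset.mem_univ i)]
    have hcard : ((L - 1 : ℕ) : ℝ) = (L:ℝ) - 1 := by
      push_cast [Nat.cast_sub (by omega : 1 ≤ L)]
      ring
    simp only [Finset.card_univ, Fintype.card_fin, nsmul_eq_mul, Pi.smul_apply,
      Pi.single_eq_same, smul_eq_mul, mul_one, hcard]
  have h2 : ∀ i : Fin L, sdev L (c • (Pi.single i 1 : Fin L → ℝ)) = 1 := by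
    intro i
    rw [sdev, hmea i, hsum i]
    have : ((c - c / L) ^ 2 + ((L:ℝ) - 1) * (c / L) ^ 2) / L = 1 := by
      have e1 : (c - c / L) ^ 2 + ((L:ℝ) - 1) * (c / L) ^ 2 = c ^ 2 * ((L:ℝ) - 1) / L := by
        field_simp
        ring
      have hc2 : c ^ 2 = (L:ℝ) ^ 2 / ((L:ℝ) - 1) := by
        rw [hc, div_pow, hsq]
      rw [e1, hc2]
      field_simp
    rw [this, Real.sqrt_one]
  refine ⟨h1, h2, ?_⟩
  -- part 3
  have hfe : ∀ i : Fin L, f (c • (Pi.single i 1 : Fin L → ℝ))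
      = c • A.mulVec (Pi.single i 1) + b := by
    intro i
    rw [hf, h2 i, one_smul, Matrix.mulVec_smul]
  have hf1 : f (fun _ => 1) = A.mulVec (fun _ => 1) := by
    rw [hf, h1, zero_smul, add_zero]
  calc (s / L) • (∑ i : Fin L, f (c • (Pi.single i 1 : Fin L → ℝ))) - f (fun _ => 1)
      = (s / L) • (c • A.mulVec (fun _ => 1) + (L:ℝ) • b) - A.mulVec (fun _ => 1) := by
        rw [hf1]
        congr 1
        congr 1
        rw [Finset.sum_congr rfl (fun i _ => hfe i), Finset.sum_add_distrib,
          ← Finset.smul_sum]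
        have hsumA : ∑ x : Fin L, A.mulVec (Pi.single x 1) = A.mulVec (fun _ => 1) := by
          ext j
          simp only [Finset.sum_apply, Matrix.mulVec, dotProduct]
          rw [Finset.sum_comm]
          simp [Pi.single_apply]
        rw [hsumA]
        congr 1
        ext t
        simp [Finset.sum_apply, Finset.sum_const, nsmul_eq_mul]
    _ = s • b := by
        have h1' : (s / L) * c = 1 := by
          rw [hc]; field_simp
        have h2' : (s / L) * (L:ℝ) = s := by field_simp
        rw [smul_add, smul_smul, smul_smul, h1', h2', one_smul, add_sub_cancel_left]
end
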